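/- arXiv:1808.00696 — 2 statements merged into one kernel-verified Lean document; each statement's English description precedes it below -/
import Mathlib

section
/- Let G be a connected finite simple graph with adjacency matrix A and let a be a vertex of G with eccentricity ε_a. Then ε_a + 1 ≤ |Φ_a|, i.e. the number of distinct eigenvalues of A whose eigenprojection does not annihilate δ_a is at least one more than the eccentricity of a. -/
/-- The orthogonal projection onto the `μ`-eigenspace of a matrix `A`. -/
noncomputable def eigProj {n : Type*} [Fintype n] [DecidableEq n] (A : Matrix n n ℝ) (μ : ℝ)
    (x : EuclideanSpace ℝ n) : EuclideanSpace ℝ n :=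
  (Submodule.orthogonalProjectionOnto (Module.End.eigenspace (Matrix.toEuclideanLin A) μ) x :
    EuclideanSpace ℝ n)

/-- `Φ_a`: the set of eigenvalues of `A` whose eigenprojection does not annihilate `δ_a`. -/
noncomputable def eigSupport {n : Type*} [Fintype n] [DecidableEq n] (A : Matrix n n ℝ)
    (a : n) : Set ℝ :=
  {μ | eigProj A μ (EuclideanSpace.single a 1) ≠ 0}

/-!
The Krylov vectors `Aᵏ δ_a`, `0 ≤ k ≤ ε_a`, are linearly independent: if `b` is at distance `k`
from `a`, then `(Aʲ)_{ba}` counts walks of length `j` from `b` to `a`, so it vanishes for `j < k`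
and is positive for `j = k`. On the other hand, by the spectral theorem
`Aᵏ δ_a = ∑_{μ ∈ Φ_a} μᵏ E_μ δ_a`, so all of them lie in the span of the `|Φ_a|` vectors `E_μ δ_a`.
-/

open Module.End

section Spectral

variable {𝕜 E : Type*} [RCLike 𝕜] [NormedAddCommGroup E] [InnerProductSpace 𝕜 E]
  [FiniteDimensional 𝕜 E] {T : E →ₗ[𝕜] E}

theorem LinearMap.IsSymmetric.sum_starProjection_eigenspaces (hT : T.IsSymmetric) (x : E) :
    ∑ μ : Eigenvalues T, (eigenspace T μ).starProjection x = x :=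
  hT.orthogonalFamily_eigenspaces'.sum_projection_of_mem_iSup x <| by
    rw [Submodule.orthogonal_eq_bot_iff.mp hT.orthogonalComplement_iSup_eigenspaces_eq_bot']
    trivial

variable (T) in
noncomputable def spectralSupport (x : E) : Set 𝕜 :=
  {μ | (eigenspace T μ).starProjection x ≠ 0}

theorem spectralSupport_finite (x : E) : (spectralSupport T x).Finite :=
  (Set.finite_range (Eigenvalues.val T)).subset fun μ hμ =>
    ⟨⟨μ, fun h => hμ <| by simp [h]⟩, rfl⟩

theorem LinearMap.IsSymmetric.pow_apply_mem_span_spectralSupport (hT : T.IsSymmetric) (x : E)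
    (k : ℕ) : (T ^ k) x ∈ Submodule.span 𝕜
      ((fun μ => (eigenspace T μ).starProjection x) '' spectralSupport T x) := by
  rw [← congrArg (T ^ k) (hT.sum_starProjection_eigenspaces x), map_sum]
  refine Submodule.sum_mem _ fun μ _ => ?_
  by_cases h : (eigenspace T μ).starProjection x = 0
  · simp [h]
  · rw [HasEigenvector.pow_apply ⟨(eigenspace T μ).starProjection_apply_mem x, h⟩]
    exact Submodule.smul_mem _ _ (Submodule.subset_span ⟨μ, h, rfl⟩)

theorem LinearMap.IsSymmetric.le_ncard_spectralSupport (hT : T.IsSymmetric) {x : E} {m : ℕ}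
    (h : LinearIndependent 𝕜 fun k : Fin m => (T ^ (k : ℕ)) x) :
    m ≤ (spectralSupport T x).ncard := by
  set W := Submodule.span 𝕜 ((fun μ => (eigenspace T μ).starProjection x) '' spectralSupport T x)
  have hW : LinearIndependent 𝕜 fun k : Fin m =>
      (⟨(T ^ (k : ℕ)) x, hT.pow_apply_mem_span_spectralSupport x k⟩ : W) :=
    .of_comp W.subtype h
  have hfin := spectralSupport_finite (T := T) x
  have := (hfin.image fun μ => (eigenspace T μ).starProjection x).fintype
  calc m = Fintype.card (Fin m) := (Fintype.card_fin m).symm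
    _ ≤ Module.finrank 𝕜 W := hW.fintype_card_le_finrank
    _ ≤ _ := finrank_span_le_card _
    _ = (_ : Set E).ncard := (Set.ncard_eq_toFinset_card' _).symm
    _ ≤ _ := Set.ncard_image_le hfin

end Spectral

theorem linearIndependent_of_triangular {R M ι : Type*} [CommRing R] [IsDomain R]
    [AddCommGroup M] [Module R M] [Fintype ι] [LinearOrder ι] {v : ι → M}
    (f : ι → Module.Dual R M) (hlt : ∀ i j, i < j → f j (v i) = 0)
    (hdiag : ∀ i, f i (v i) ≠ 0) : LinearIndependent R v := by
  classical
  have hdet : (Matrix.of fun i j => f j (v i)).det ≠ 0 := by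
    rw [Matrix.det_of_isLowerTriangular (Matrix.of fun i j => f j (v i)) fun i j => hlt i j]
    exact Finset.prod_ne_zero_iff.mpr fun i _ => hdiag i
  exact .of_comp (LinearMap.pi f) (Matrix.linearIndependent_rows_of_det_ne_zero hdet)

theorem Matrix.toLpLin_pow_apply_single {n R : Type*} [Fintype n] [DecidableEq n] [CommRing R]
    (p : ENNReal) (A : Matrix n n R) (k : ℕ) (a b : n) :
    (toLpLin p p A ^ k) (PiLp.single p a 1) b = (A ^ k) b a := by
  rw [← toLpLin_pow, toLpLin_apply]
  simp

namespace SimpleGraph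

variable {V R : Type*} {G : SimpleGraph V} {u v : V}

theorem Reachable.exists_dist_eq_of_le (h : G.Reachable u v) {t : ℕ} (ht : t ≤ G.dist u v) :
    ∃ w, G.dist u w = t := by
  obtain ⟨p, hp⟩ := h.exists_walk_length_eq_dist
  refine ⟨p.getVert t, ?_⟩
  rw [← length_eq_dist_of_subwalk hp (p.isSubwalk_take t), Walk.take_length]
  omega

variable [Fintype V] [DecidableEq V] [DecidableRel G.Adj]

theorem adjMatrix_pow_apply_eq_zero_of_lt_dist [Semiring R] {k : ℕ} (hk : k < G.dist u v) :
    (G.adjMatrix R ^ k) u v = 0 := by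
  have : IsEmpty {p : G.Walk u v | p.length = k} := ⟨fun ⟨p, hp⟩ => (dist_le p).not_gt (hp ▸ hk)⟩
  rw [adjMatrix_pow_apply_eq_card_walk, Fintype.card_eq_zero, Nat.cast_zero]

theorem Reachable.adjMatrix_pow_dist_apply_pos [Semiring R] [PartialOrder R]
    [IsStrictOrderedRing R] (h : G.Reachable u v) : 0 < (G.adjMatrix R ^ G.dist u v) u v := by
  rw [adjMatrix_pow_apply_eq_card_walk, Nat.cast_pos, Fintype.card_pos_iff]
  obtain ⟨p, hp⟩ := h.exists_walk_length_eq_dist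
  exact ⟨⟨p, hp⟩⟩

end SimpleGraph

/-- For a connected finite simple graph `G` with adjacency matrix `A` and a vertex `a` of
eccentricity `ε_a`, one has `ε_a + 1 ≤ |Φ_a|`. -/
theorem eccentricity_lt_support_card {V : Type*} [Fintype V] [DecidableEq V]
    (G : SimpleGraph V) [DecidableRel G.Adj] (hconn : G.Connected) (a : V)
    (ε : ℕ) (hε : ε = Finset.univ.sup (G.dist a)) :
    ε + 1 ≤ (eigSupport (G.adjMatrix ℝ) a).ncard := by
  have hT := Matrix.isSymmetric_toEuclideanLin_iff.mpr (G.isHermitian_adjMatrix ℝ)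
  obtain ⟨b, -, hb⟩ := Finset.exists_mem_eq_sup Finset.univ
    (Finset.univ_nonempty_iff.mpr hconn.nonempty) (G.dist a)
  choose c hc using fun k : Fin (ε + 1) => (hconn a b).exists_dist_eq_of_le (t := k) (by omega)
  have hli : LinearIndependent ℝ fun k : Fin (ε + 1) =>
      (Matrix.toEuclideanLin (G.adjMatrix ℝ) ^ (k : ℕ)) (EuclideanSpace.single a 1) := by
    refine linearIndependent_of_triangular (fun k => (EuclideanSpace.proj (c k)).toLinearMap) ?_ ?_
    · intro i j hij
      refine (Matrix.toLpLin_pow_apply_single _ _ _ _ _).trans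
        (SimpleGraph.adjMatrix_pow_apply_eq_zero_of_lt_dist ?_)
      rwa [SimpleGraph.dist_comm, hc j]
    · intro k
      have hpos := (hconn (c k) a).adjMatrix_pow_dist_apply_pos (R := ℝ)
      rw [SimpleGraph.dist_comm, hc k] at hpos
      exact ((Matrix.toLpLin_pow_apply_single _ _ _ _ _).trans_gt hpos).ne'
  -- `eigSupport A a` is `spectralSupport (toEuclideanLin A) (single a 1)` by definition.
  exact hT.le_ncard_spectralSupport hli
end

section
/- Fix k ≥ 1 and let A be the 3^k × 3^k matrix indexed by vectors x ∈ {0,1,2}^k, with A_{x,y} = 1 if x and y differ in exactly one coordinate and in that coordinate differ by exactly 1, and A_{x,y} = 0 otherwise (the adjacency matrix of the k-fold Cartesian power of the path P₃). Then |(exp(−i (π/√2) A))_{b,a}| = 1, where a = (0,…,0) and b = (2,…,2); moreover, the graph distance from a to b is 2k. Thus the P₃ hypercube achieves perfect state transfer over even distance D = 2k at time π/√2, using 3^{D/2} vertices. -/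
open Matrix Finset

/-- The `k`-fold Cartesian power of the path `P₃`, on vertex set `{0,1,2}^k`: two vertices
are adjacent iff they differ in exactly one coordinate, and in that coordinate differ by
exactly `1`. -/
def pathPower (k : ℕ) : SimpleGraph (Fin k → Fin 3) where
  Adj x y := (Finset.univ.filter fun i => x i ≠ y i).card = 1 ∧
    ∀ i, x i ≠ y i → ((x i : ℤ) - (y i : ℤ)).natAbs = 1
  symm := by
    constructor
    intro x y h
    refine ⟨by simpa [ne_comm] using h.1, fun i hi => ?_⟩
    have := h.2 i hi.symm
    omega
  loopless := by
    constructor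
    intro x h
    simp at h

instance (k : ℕ) : DecidableRel (pathPower k).Adj :=
  fun _ _ => inferInstanceAs (Decidable (_ ∧ _))

/-!
The adjacency matrix of the `k`-th Cartesian power of `P₃` is the Kronecker sum of `k` copies of
the adjacency matrix `a` of `P₃`, so its exponential is the `k`-fold Kronecker power of
`exp (τ a)`: the entry at `((2,…,2), (0,…,0))` is `(exp (τ a) 2 0) ^ k`. The eigenvalues of `a`
are `0, ±√2`, so at `τ = -iπ/√2` the eigenvalue phases are `1, -1, -1`, which gives
`exp (τ a) = 1 - a²` and `exp (τ a) 2 0 = -1`. The graph distance is the taxicab distance on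
`{0,1,2}^k`: an edge changes the taxicab distance to a fixed vertex by at most one, and from any
other vertex some edge decreases it.
-/

open NormedSpace SimpleGraph

namespace Matrix

variable {n : Type*} [Fintype n] [DecidableEq n]

theorem pow_mulVec_of_mulVec_eq_smul {R : Type*} [CommSemiring R] {N : Matrix n n R}
    {v : n → R} {μ : R} (h : N *ᵥ v = μ • v) (m : ℕ) : N ^ m *ᵥ v = μ ^ m • v := by
  induction m with
  | zero => simp
  | succ m ih => rw [pow_succ, ← mulVec_mulVec, h, mulVec_smul, ih, smul_smul, pow_succ']

attribute [local instance] Matrix.linftyOpNormedRing Matrix.linftyOpNormedAlgebra in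
theorem exp_mulVec_of_mulVec_eq_smul {𝕂 : Type*} [RCLike 𝕂] {N : Matrix n n 𝕂}
    {v : n → 𝕂} {μ : 𝕂} (h : N *ᵥ v = μ • v) : exp N *ᵥ v = exp μ • v := by
  have hN := (exp_series_hasSum_exp' (𝕂 := 𝕂) N).map (mulVec.addMonoidHomLeft v)
    (continuous_id.matrix_mulVec continuous_const)
  have hμ := (exp_series_hasSum_exp' (𝕂 := 𝕂) μ).smul_const v
  refine hN.unique (hμ.congr_fun fun m => ?_)
  simp [mulVec.addMonoidHomLeft, smul_mulVec, pow_mulVec_of_mulVec_eq_smul h, smul_smul]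

section Eigenbasis

variable {𝕂 β : Type*} [RCLike 𝕂] [Fintype β] {a : Matrix n n 𝕂} {w : β → n → 𝕂} {μ : β → 𝕂}

theorem exp_smul_mulVec_sum (hw : ∀ c, a *ᵥ w c = μ c • w c) (τ : 𝕂) (d : β → 𝕂) :
    exp (τ • a) *ᵥ ∑ c, d c • w c = ∑ c, (d c * exp (τ * μ c)) • w c := by
  simp only [mulVec_sum, mulVec_smul]
  refine Finset.sum_congr rfl fun c _ => ?_
  rw [exp_mulVec_of_mulVec_eq_smul (by rw [smul_mulVec, hw, smul_smul]), smul_smul]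

theorem exp_smul_apply_eq_sum (hw : ∀ c, a *ᵥ w c = μ c • w c) {s : n} {d : β → 𝕂}
    (hd : ∑ c, d c • w c = Pi.single s 1) (τ : 𝕂) (t : n) :
    exp (τ • a) t s = ∑ c, d c * exp (τ * μ c) * w c t := by
  rw [show exp (τ • a) t s = (exp (τ • a) *ᵥ Pi.single s 1) t by simp, ← hd,
    exp_smul_mulVec_sum hw, Finset.sum_apply]
  simp

end Eigenbasis

section KroneckerSum

variable {ι α R : Type*} [Fintype ι]

theorem prod_single_one_apply [DecidableEq α] [CommMonoidWithZero R] (s : α) (x : ι → α) :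
    ∏ i, (Pi.single s 1 : α → R) (x i) = (Pi.single (fun _ => s) 1 : (ι → α) → R) x := by
  simp only [Pi.single_apply, Fintype.prod_boole, funext_iff]

variable [DecidableEq ι]

theorem sum_prod_smul_prod [CommSemiring R] {β : Type*} [Fintype β] (d : β → R)
    (w : β → α → R) :
    ∑ χ : ι → β, (∏ i, d (χ i)) • (fun x : ι → α => ∏ i, w (χ i) (x i)) =
      fun x => ∏ i, ∑ c, d c * w c (x i) := by
  ext x
  simp [Fintype.prod_sum, Finset.prod_mul_distrib]

variable [Fintype α] [DecidableEq α]

/-- The Kronecker sum `a ⊗ 1 ⊗ ⋯ ⊗ 1 + 1 ⊗ a ⊗ ⋯ ⊗ 1 + ⋯ + 1 ⊗ ⋯ ⊗ 1 ⊗ a` of `|ι|` copies of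
`a`, with rows and columns indexed by `ι → α`. -/
def piKroneckerSum [CommSemiring R] (a : Matrix α α R) : Matrix (ι → α) (ι → α) R :=
  of fun x y => ∑ i, ∏ j, if j = i then a (x j) (y j) else (1 : Matrix α α R) (x j) (y j)

theorem piKroneckerSum_mulVec_prod [CommSemiring R] {β : Type*} {a : Matrix α α R}
    {w : β → α → R} {μ : β → R} (hw : ∀ c, a *ᵥ w c = μ c • w c) (χ : ι → β) :
    piKroneckerSum a *ᵥ (fun x => ∏ i, w (χ i) (x i)) =
      (∑ i, μ (χ i)) • fun x => ∏ i, w (χ i) (x i) := by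
  ext x
  have factor (i j : ι) :
      ∑ c, (if j = i then a (x j) c else (1 : Matrix α α R) (x j) c) * w (χ j) c =
        (if j = i then μ (χ i) else 1) * w (χ j) (x j) := by
    split_ifs with hji
    · subst hji; exact congr_fun (hw (χ j)) (x j)
    · simp [one_apply]
  calc (piKroneckerSum a *ᵥ fun x => ∏ i, w (χ i) (x i)) x
      = ∑ i, ∑ y : ι → α, ∏ j,
          (if j = i then a (x j) (y j) else (1 : Matrix α α R) (x j) (y j)) * w (χ j) (y j) := by
        simp only [mulVec, dotProduct, piKroneckerSum, of_apply, Finset.sum_mul,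
          ← Finset.prod_mul_distrib]
        exact Finset.sum_comm
    _ = ∑ i, ∏ j, (if j = i then μ (χ i) else 1) * w (χ j) (x j) := by
        refine Finset.sum_congr rfl fun i _ => ?_
        rw [← Fintype.prod_sum fun j c =>
          (if j = i then a (x j) c else (1 : Matrix α α R) (x j) c) * w (χ j) c]
        exact Finset.prod_congr rfl fun j _ => factor i j
    _ = _ := by
        simp only [Finset.prod_mul_distrib, Finset.prod_ite_eq', Finset.mem_univ, if_true,
          Finset.sum_mul, Pi.smul_apply, smul_eq_mul]

theorem exp_smul_piKroneckerSum_apply {𝕂 β : Type*} [RCLike 𝕂] [Fintype β] {a : Matrix α α 𝕂}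
    {w : β → α → 𝕂} {μ : β → 𝕂} (hw : ∀ c, a *ᵥ w c = μ c • w c) {s : α} {d : β → 𝕂}
    (hd : ∑ c, d c • w c = Pi.single s 1) (τ : 𝕂) (y : ι → α) :
    exp (τ • piKroneckerSum a) y (fun _ => s) = ∏ i, exp (τ • a) (y i) s := by
  have hsingle : (Pi.single (fun _ => s) 1 : (ι → α) → 𝕂) =
      ∑ χ : ι → β, (∏ i, d (χ i)) • fun x => ∏ i, w (χ i) (x i) := by
    ext x
    rw [sum_prod_smul_prod, ← prod_single_one_apply, ← hd]
    simp
  rw [show exp (τ • piKroneckerSum a) y (fun _ => s) =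
      (exp (τ • piKroneckerSum a) *ᵥ Pi.single (fun _ => s) 1) y by simp, hsingle,
    exp_smul_mulVec_sum (piKroneckerSum_mulVec_prod hw), Finset.sum_apply]
  simp only [exp_smul_apply_eq_sum hw hd, Fintype.prod_sum, Pi.smul_apply, smul_eq_mul,
    Finset.mul_sum, exp_sum, ← Finset.prod_mul_distrib]

end KroneckerSum

end Matrix

namespace SimpleGraph

instance (n : ℕ) : DecidableRel (pathGraph n).Adj :=
  fun _ _ => decidable_of_iff' _ pathGraph_adj

noncomputable def pathThreeEigvec : Fin 3 → Fin 3 → ℂ :=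
  ![![1, 0, -1], ![1, √2, 1], ![1, -√2, 1]]

noncomputable def pathThreeEigval : Fin 3 → ℂ := ![0, √2, -√2]

theorem pathGraph_three_adjMatrix_mulVec_eigvec (c : Fin 3) :
    (pathGraph 3).adjMatrix ℂ *ᵥ pathThreeEigvec c = pathThreeEigval c • pathThreeEigvec c := by
  have hsq : ((√2 : ℝ) : ℂ) ^ 2 = 2 := by
    rw [← Complex.ofReal_pow, Real.sq_sqrt zero_le_two, Complex.ofReal_ofNat]
  ext x
  fin_cases c <;> fin_cases x <;>
    simp [mulVec, dotProduct, Fin.sum_univ_three, adjMatrix_apply, pathGraph_adj,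
      pathThreeEigvec, pathThreeEigval] <;>
    linear_combination -hsq

-- The eigenvectors are orthogonal, of squared norms `2, 4, 4`.
theorem sum_smul_pathThreeEigvec :
    ∑ c, (![1/2, 1/4, 1/4] : Fin 3 → ℂ) c • pathThreeEigvec c = Pi.single 0 1 := by
  ext x
  fin_cases x <;> simp [Fin.sum_univ_three, pathThreeEigvec] <;> norm_num

theorem exp_pathThreeEigval (c : Fin 3) :
    Complex.exp (-Complex.I * (Real.pi / Real.sqrt 2) * pathThreeEigval c) =
      if c = 0 then 1 else -1 := by
  have hπ : Complex.I * (Real.pi / Real.sqrt 2) * ((√2 : ℝ) : ℂ) = Real.pi * Complex.I := by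
    field_simp
  fin_cases c <;> simp [pathThreeEigval]
  · rw [hπ, Complex.exp_neg, Complex.exp_pi_mul_I]; norm_num
  · rw [hπ, Complex.exp_pi_mul_I]

theorem pathGraph_three_exp_apply_two_zero :
    exp ((-Complex.I * (Real.pi / Real.sqrt 2)) • (pathGraph 3).adjMatrix ℂ) 2 0 = -1 := by
  rw [exp_smul_apply_eq_sum pathGraph_three_adjMatrix_mulVec_eigvec sum_smul_pathThreeEigvec,
    Fin.sum_univ_three]
  simp only [← Complex.exp_eq_exp_ℂ, exp_pathThreeEigval]
  simp [pathThreeEigvec]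
  norm_num

end SimpleGraph

namespace PathPower

variable {k : ℕ}

theorem adj_iff {x y : Fin k → Fin 3} :
    (pathPower k).Adj x y ↔ ∃ i, (pathGraph 3).Adj (x i) (y i) ∧ ∀ j ≠ i, x j = y j := by
  have adj3 (u v : Fin 3) : (pathGraph 3).Adj u v ↔ ((u : ℤ) - v).natAbs = 1 := by
    rw [pathGraph_adj]; omega
  simp only [adj3]
  constructor
  · rintro ⟨hcard, hdiff⟩
    obtain ⟨i, hi⟩ := Finset.card_eq_one.mp hcard
    have hmem (j : Fin k) : x j ≠ y j ↔ j = i := by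
      simpa using Finset.ext_iff.mp hi j
    exact ⟨i, hdiff i ((hmem i).mpr rfl), fun j hj => not_not.mp (mt (hmem j).mp hj)⟩
  · rintro ⟨i, hi, hrest⟩
    have hfilter : Finset.univ.filter (fun j => x j ≠ y j) = {i} := by
      ext j
      simp only [Finset.mem_filter, Finset.mem_univ, true_and, Finset.mem_singleton]
      exact ⟨not_imp_comm.mp (hrest j), fun h => h ▸ fun h' => by simp [h'] at hi⟩
    refine ⟨by rw [hfilter, Finset.card_singleton], fun j hj => ?_⟩
    rwa [not_imp_comm.mp (hrest j) hj]

theorem adjMatrix_eq_piKroneckerSum (R : Type*) [CommSemiring R] :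
    (pathPower k).adjMatrix R = piKroneckerSum ((pathGraph 3).adjMatrix R) := by
  ext x y
  have term (i : Fin k) :
      (∏ j, if j = i then (pathGraph 3).adjMatrix R (x j) (y j)
        else (1 : Matrix _ _ R) (x j) (y j)) =
        if (pathGraph 3).Adj (x i) (y i) ∧ ∀ j ≠ i, x j = y j then 1 else 0 := by
    rw [Fintype.prod_eq_mul_prod_compl i, if_pos rfl,
      Finset.prod_congr rfl fun j hj => if_neg (Finset.mem_compl.mp hj ∘ Finset.mem_singleton.mpr)]
    simp only [adjMatrix_apply, one_apply, Finset.prod_boole, ite_zero_mul_ite_zero, mul_one,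
      Finset.mem_compl, Finset.mem_singleton]
  rw [adjMatrix_apply]
  simp only [piKroneckerSum, of_apply, term]
  by_cases h : (pathPower k).Adj x y
  · obtain ⟨i, hi, hrest⟩ := adj_iff.mp h
    rw [if_pos h, Finset.sum_eq_single i (fun i' _ hi' => if_neg fun h' => hi.ne (h'.2 i hi'.symm))
      (by simp), if_pos ⟨hi, hrest⟩]
  · rw [if_neg h, Finset.sum_eq_zero fun i _ => if_neg fun h' => h (adj_iff.mpr ⟨i, h'⟩)]

def taxicabDist (x y : Fin k → Fin 3) : ℕ := ∑ i, ((x i : ℤ) - y i).natAbs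

theorem exists_pathGraph_three_adj_toward :
    ∀ a b : Fin 3, a ≠ b →
      ∃ c, (pathGraph 3).Adj a c ∧ ((c : ℤ) - b).natAbs + 1 = ((a : ℤ) - b).natAbs := by
  decide

theorem taxicabDist_add_natAbs {x y : Fin k → Fin 3} (z : Fin k → Fin 3) {i : Fin k}
    (h : ∀ j ≠ i, x j = y j) :
    taxicabDist x z + ((y i : ℤ) - z i).natAbs = taxicabDist y z + ((x i : ℤ) - z i).natAbs := by
  rw [taxicabDist, taxicabDist, Fintype.sum_eq_add_sum_compl i, Fintype.sum_eq_add_sum_compl i,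
    Finset.sum_congr rfl fun j hj => by rw [h j (by simpa using hj)]]
  ring

theorem taxicabDist_le_length {x y : Fin k → Fin 3} (p : (pathPower k).Walk x y) :
    taxicabDist x y ≤ p.length := by
  induction p with
  | nil => simp [taxicabDist]
  | @cons x x' y h p ih =>
    obtain ⟨i, hi, hrest⟩ := adj_iff.mp h
    have := taxicabDist_add_natAbs y hrest
    rw [pathGraph_adj] at hi
    rw [Walk.length_cons]
    omega

theorem exists_walk_length_eq_taxicabDist (x y : Fin k → Fin 3) :
    ∃ p : (pathPower k).Walk x y, p.length = taxicabDist x y := by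
  induction hn : taxicabDist x y generalizing x with
  | zero =>
    obtain rfl : x = y := funext fun i => by
      have := (Finset.sum_eq_zero_iff.mp hn) i (Finset.mem_univ i)
      omega
    exact ⟨Walk.nil, rfl⟩
  | succ n ih =>
    obtain ⟨i, hi⟩ : ∃ i, x i ≠ y i := by
      by_contra! hxy
      simp [taxicabDist, hxy] at hn
    obtain ⟨c, hc, hcy⟩ := exists_pathGraph_three_adj_toward _ _ hi
    have hrest : ∀ j ≠ i, Function.update x i c j = x j := fun j hj => Function.update_of_ne hj _ _
    have hstep : (pathPower k).Adj x (Function.update x i c) :=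
      adj_iff.mpr ⟨i, by rwa [Function.update_self], fun j hj => (hrest j hj).symm⟩
    have hcloser := taxicabDist_add_natAbs y hrest
    rw [Function.update_self] at hcloser
    obtain ⟨p, hp⟩ := ih (Function.update x i c) (by omega)
    exact ⟨Walk.cons hstep p, by rw [Walk.length_cons, hp]⟩

theorem dist_eq_taxicabDist (x y : Fin k → Fin 3) : (pathPower k).dist x y = taxicabDist x y := by
  obtain ⟨p, hp⟩ := exists_walk_length_eq_taxicabDist x y
  obtain ⟨q, hq⟩ := p.reachable.exists_walk_length_eq_dist
  exact le_antisymm (hp ▸ dist_le p) (hq ▸ taxicabDist_le_length q)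

end PathPower

theorem pathPower_pst_general (k : ℕ) :
    ‖(NormedSpace.exp
        ((-Complex.I * (Real.pi / Real.sqrt 2)) • (pathPower k).adjMatrix ℂ)
        (fun _ => (2 : Fin 3)) (fun _ => (0 : Fin 3)))‖ = 1 ∧
    (pathPower k).dist (fun _ => (0 : Fin 3)) (fun _ => (2 : Fin 3)) = 2 * k := by
  constructor
  · rw [PathPower.adjMatrix_eq_piKroneckerSum, exp_smul_piKroneckerSum_apply
      pathGraph_three_adjMatrix_mulVec_eigvec sum_smul_pathThreeEigvec]
    simp only [pathGraph_three_exp_apply_two_zero]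
    simp
  · simp [PathPower.dist_eq_taxicabDist, PathPower.taxicabDist, mul_comm]

/-- **`P₃` hypercube perfect state transfer.** The `k`-fold Cartesian power of `P₃`
achieves perfect state transfer at time `π/√2` from `a = (0,…,0)` to `b = (2,…,2)`, which
lies at graph distance `2k`; it uses `3^k = 3^{D/2}` vertices for the distance `D = 2k`. -/
theorem pathPower_pst (k : ℕ) (hk : 1 ≤ k) :
    ‖(NormedSpace.exp
        ((-Complex.I * (Real.pi / Real.sqrt 2)) • (pathPower k).adjMatrix ℂ)
        (fun _ => (2 : Fin 3)) (fun _ => (0 : Fin 3)))‖ = 1 ∧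
    (pathPower k).dist (fun _ => (0 : Fin 3)) (fun _ => (2 : Fin 3)) = 2 * k :=
  pathPower_pst_general k
end
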